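/- arXiv:1312.5556 — 2 statements merged into one kernel-verified Lean document; each statement's English description precedes it below -/
import Mathlib

section
/- Let 𝒯 be a hierarchy on a finite set V, let S₀ ⊆ V, and let p_adj^{C,(b)} : Ω → [0,1] (C ∈ 𝒯, b = 1,…,B) be random variables on a probability space (Ω, ℱ, ℙ). Assume there is a measurable event A with ℙ(A) ≥ (1−δ)^B (where δ ∈ (0,1)) such that for every b ∈ {1,…,B} and every t ∈ (0,1), ∑_{C ∈ 𝒯̃₀} ℙ({p_adj^{C,(b)} ≤ t} ∩ A) ≤ t. Then for every significance level α ∈ (0,1), the γ-free hierarchically adjusted p-values P_h^C control the familywise error rate: ℙ(∃ C ∈ 𝒯₀ with P_h^C ≤ α) ≤ α + 1 − (1−δ)^B ≤ α + Bδ. -/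
open MeasureTheory Finset

/-- A hierarchy on a finite set `V`: a finite collection of nonempty subsets of `V`
containing `V` itself, such that any two members are nested or disjoint. -/
def IsHierarchy {ι : Type*} [DecidableEq ι] (V : Finset ι) (𝒯 : Finset (Finset ι)) : Prop :=
  V ∈ 𝒯 ∧ (∀ C ∈ 𝒯, C.Nonempty ∧ C ⊆ V) ∧
    ∀ C ∈ 𝒯, ∀ D ∈ 𝒯, C ⊆ D ∨ D ⊆ C ∨ C ∩ D = ∅

/-- The null clusters: members of the hierarchy not meeting the active set `S₀`. -/
def nullClusters {ι : Type*} [DecidableEq ι] (𝒯 : Finset (Finset ι)) (S₀ : Finset ι) :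
    Finset (Finset ι) :=
  𝒯.filter (fun C => C ∩ S₀ = ∅)

/-- The maximal null clusters: null clusters which are not strictly contained
in another null cluster. -/
def maxNullClusters {ι : Type*} [DecidableEq ι] (𝒯 : Finset (Finset ι)) (S₀ : Finset ι) :
    Finset (Finset ι) :=
  (nullClusters 𝒯 S₀).filter (fun C => ∀ D ∈ nullClusters 𝒯 S₀, ¬ C ⊂ D)

/-- The empirical `γ`-quantile of `a 1, …, a B`: the `⌈γ B⌉`-th smallest of the values. -/
noncomputable def empQuantile (γ : ℝ) {B : ℕ} (a : Fin B → ℝ) : ℝ :=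
  sInf {x : ℝ | ⌈γ * B⌉₊ ≤ (Finset.univ.filter (fun b => a b ≤ x)).card}

/-- The aggregated p-value `Q^C(γ) = min (1, q_γ({p_adj^{C,(b)}/γ}))`. -/
noncomputable def Qagg {ι : Type*} {Ω : Type*} {B : ℕ}
    (p : Finset ι → Fin B → Ω → ℝ) (γ : ℝ) (C : Finset ι) (ω : Ω) : ℝ :=
  min 1 (empQuantile γ (fun b => p C b ω / γ))

/-- The hierarchically adjusted aggregated p-value
`Q_h^C(γ) = max {Q^D(γ) : D ∈ 𝒯, C ⊆ D}` (for `C ∈ 𝒯`). -/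
noncomputable def Qhier {ι : Type*} [DecidableEq ι] {Ω : Type*} {B : ℕ}
    (𝒯 : Finset (Finset ι)) (p : Finset ι → Fin B → Ω → ℝ) (γ : ℝ)
    (C : Finset ι) (ω : Ω) : ℝ :=
  (insert C (𝒯.filter (fun D => C ⊆ D))).sup' (Finset.insert_nonempty _ _)
    (fun D => Qagg p γ D ω)


/-- The γ-free p-value `P^C = min (1, (1 - log γ_min) · inf_{γ ∈ (γ_min,1)} Q^C(γ))`. -/
noncomputable def Pval {ι : Type*} {Ω : Type*} {B : ℕ}
    (p : Finset ι → Fin B → Ω → ℝ) (γmin : ℝ) (C : Finset ι) (ω : Ω) : ℝ :=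
  min 1 ((1 - Real.log γmin) * sInf ((fun γ => Qagg p γ C ω) '' Set.Ioo γmin 1))

/-- The hierarchically adjusted γ-free p-value `P_h^C = max {P^D : D ∈ 𝒯, C ⊆ D}`
(for `C ∈ 𝒯`). -/
noncomputable def Phier {ι : Type*} [DecidableEq ι] {Ω : Type*} {B : ℕ}
    (𝒯 : Finset (Finset ι)) (p : Finset ι → Fin B → Ω → ℝ) (γmin : ℝ)
    (C : Finset ι) (ω : Ω) : ℝ :=
  (insert C (𝒯.filter (fun D => C ⊆ D))).sup' (Finset.insert_nonempty _ _)
    (fun D => Pval p γmin D ω)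

/-! On the event `A`, a null cluster `C` with `P_h^C ≤ α` lies in a maximal null cluster `D`
with `P^D ≤ α`, so it suffices to bound `∑_D ℙ({P^D ≤ α} ∩ A)` and add `ℙ(Aᶜ) ≤ 1 - (1 - δ)^B`.
If `P^D ≤ α`, then for every `v > α / (1 - log γ_min)` some `γ ∈ (γ_min, 1)` has at least
`k = ⌈γ B⌉ ≥ k₀ := ⌊γ_min B⌋ + 1` of the `B` p-values below `v k / B`. The count `c(t)` of
p-values below `t` is monotone, so `c(v) / B + ∑_{k₀ ≤ j < B} c(v j / B) / (j (j + 1)) ≥ 1`, the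
weights of the levels `j ≥ k` adding up to `1 / k`. Markov's inequality and superuniformity at
each level bound the sum over `D` by `v (1 + ∑_{k₀ ≤ j < B} 1 / (j + 1)) ≤ v (1 - log γ_min)`;
now let `v ↓ α / (1 - log γ_min)`. -/

lemma sum_Ico_one_div_mul_succ {k n : ℕ} (hk : 1 ≤ k) (hkn : k ≤ n) :
    ∑ j ∈ Ico k n, 1 / ((j : ℝ) * (j + 1)) = 1 / k - 1 / n := by
  induction n, hkn using Nat.le_induction with
  | base => simp
  | succ n hkn ih =>
    have hn : (0 : ℝ) < n := by exact_mod_cast hk.trans hkn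
    rw [sum_Ico_succ_top hkn, ih]
    push_cast
    field_simp
    ring

lemma sum_Ico_one_div_succ_le_log {k n : ℕ} (hk : 1 ≤ k) (hkn : k ≤ n) :
    ∑ j ∈ Ico k n, 1 / ((j : ℝ) + 1) ≤ Real.log n - Real.log k := by
  induction n, hkn using Nat.le_induction with
  | base => simp
  | succ n hkn ih =>
    have hn : (0 : ℝ) < n := by exact_mod_cast hk.trans hkn
    have hstep : 1 / ((n : ℝ) + 1) ≤ Real.log (n + 1) - Real.log n := by
      have h := Real.one_sub_inv_le_log_of_pos (x := (n + 1) / n) (by positivity)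
      rw [Real.log_div (by positivity) hn.ne', inv_div] at h
      calc 1 / ((n : ℝ) + 1) = 1 - n / (n + 1) := by field_simp; ring
        _ ≤ _ := h
    rw [sum_Ico_succ_top hkn]
    push_cast
    linarith

lemma one_add_sum_Ico_one_div_succ_le {γ : ℝ} (hγ : 0 < γ) {k n : ℕ} (hk : γ * n < k)
    (hkn : k ≤ n) : 1 + ∑ j ∈ Ico k n, 1 / ((j : ℝ) + 1) ≤ 1 - Real.log γ := by
  have hk0 : 0 < k := by
    have : (0 : ℝ) < k := lt_of_le_of_lt (by positivity) hk
    exact_mod_cast this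
  have hn : (0 : ℝ) < n := by exact_mod_cast hk0.trans_le hkn
  have hlog : Real.log γ + Real.log n ≤ Real.log k := by
    rw [← Real.log_mul hγ.ne' hn.ne']
    exact Real.log_le_log (by positivity) hk.le
  linarith [sum_Ico_one_div_succ_le_log hk0 hkn]

lemma one_le_weighted_sum_of_le {c : ℝ → ℝ} (hc : Monotone c) (hc0 : ∀ t, 0 ≤ c t)
    {v : ℝ} (hv : 0 ≤ v) {k₀ k n : ℕ} (hk₀ : 1 ≤ k₀) (hk₀k : k₀ ≤ k) (hkn : k ≤ n)
    (hck : k ≤ c (v * k / n)) :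
    1 ≤ 1 / n * c v + ∑ j ∈ Ico k₀ n, 1 / ((j : ℝ) * (j + 1)) * c (v * j / n) := by
  have hk : (0 : ℝ) < k := by exact_mod_cast hk₀.trans hk₀k
  have hn : (0 : ℝ) < n := hk.trans_le (by exact_mod_cast hkn)
  have hle : ∀ j : ℕ, k ≤ j → j ≤ n → (k : ℝ) ≤ c (v * j / n) := fun j hkj _ =>
    hck.trans (hc (by gcongr))
  have hfirst : (k : ℝ) / n ≤ 1 / n * c v := by
    rw [div_eq_inv_mul, ← one_div]
    gcongr
    simpa [hn.ne'] using hle n hkn le_rfl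
  have hrest : 1 - (k : ℝ) / n ≤ ∑ j ∈ Ico k₀ n, 1 / ((j : ℝ) * (j + 1)) * c (v * j / n) :=
    calc 1 - (k : ℝ) / n = ∑ j ∈ Ico k n, 1 / ((j : ℝ) * (j + 1)) * k := by
          rw [← sum_mul, sum_Ico_one_div_mul_succ (hk₀.trans hk₀k) hkn]
          field_simp
      _ ≤ ∑ j ∈ Ico k n, 1 / ((j : ℝ) * (j + 1)) * c (v * j / n) := by
          gcongr with j hj
          exact hle j (mem_Ico.mp hj).1 (mem_Ico.mp hj).2.le
      _ ≤ ∑ j ∈ Ico k₀ n, 1 / ((j : ℝ) * (j + 1)) * c (v * j / n) :=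
          sum_le_sum_of_subset_of_nonneg (Ico_subset_Ico_left hk₀k)
            fun j _ _ => mul_nonneg (by positivity) (hc0 _)
  linarith

section Quantile

variable {γ : ℝ} {B : ℕ} {a : Fin B → ℝ}

lemma exists_le_of_ceil_le_card (hγ : 0 < γ) (hB : 0 < B) {x : ℝ}
    (hx : ⌈γ * B⌉₊ ≤ #{b | a b ≤ x}) : ∃ b, a b ≤ x := by
  have hpos : 0 < #{b | a b ≤ x} := (Nat.ceil_pos.mpr (by positivity)).trans_le hx
  obtain ⟨b, hb⟩ := card_pos.mp hpos
  exact ⟨b, (mem_filter.mp hb).2⟩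

lemma empQuantile_nonneg (hγ : 0 < γ) (hB : 0 < B) (ha : ∀ b, 0 ≤ a b) :
    0 ≤ empQuantile γ a :=
  Real.sInf_nonneg fun _ hx =>
    let ⟨b, hb⟩ := exists_le_of_ceil_le_card hγ hB hx
    (ha b).trans hb

lemma ceil_le_card_of_empQuantile_lt (hγ : 0 < γ) (hγ1 : γ ≤ 1) (hB : 0 < B) {x : ℝ}
    (h : empQuantile γ a < x) : ⌈γ * B⌉₊ ≤ #{b | a b ≤ x} := by
  obtain ⟨m, hm⟩ := Finite.bddBelow_range a
  obtain ⟨M, hM⟩ := Finite.bddAbove_range a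
  have hbdd : BddBelow {x : ℝ | ⌈γ * B⌉₊ ≤ #{b | a b ≤ x}} := ⟨m, fun _ hy =>
    let ⟨b, hb⟩ := exists_le_of_ceil_le_card hγ hB hy
    (hm ⟨b, rfl⟩).trans hb⟩
  have hM_mem : M ∈ {x : ℝ | ⌈γ * B⌉₊ ≤ #{b | a b ≤ x}} := by
    have : #{b | a b ≤ M} = B := by
      rw [filter_true_of_mem fun b _ => hM ⟨b, rfl⟩, card_univ, Fintype.card_fin]
    rw [Set.mem_ofPred_eq, this, Nat.ceil_le]
    exact mul_le_of_le_one_left (Nat.cast_nonneg B) hγ1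
  obtain ⟨y, hy, hyx⟩ := (csInf_lt_iff hbdd ⟨M, hM_mem⟩).mp h
  refine hy.trans (card_le_card fun b hb => ?_)
  simp only [mem_filter] at hb ⊢
  exact ⟨hb.1, hb.2.trans hyx.le⟩

end Quantile

noncomputable def countLE {β Ω : Type*} [Fintype β] (X : β → Ω → ℝ) (t : ℝ) (ω : Ω) : ℕ :=
  #{b | X b ω ≤ t}

lemma countLE_mono {β Ω : Type*} [Fintype β] (X : β → Ω → ℝ) (ω : Ω) :
    Monotone fun t => countLE X t ω := fun _ _ hst =>
  card_le_card fun b hb => by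
    simp only [mem_filter] at hb ⊢
    exact ⟨hb.1, hb.2.trans hst⟩

lemma countLE_eq_sum_indicator {β Ω : Type*} [Fintype β] (X : β → Ω → ℝ) (t : ℝ) (ω : Ω) :
    (countLE X t ω : ℝ) = ∑ b, {ω | X b ω ≤ t}.indicator 1 ω := by
  simp [countLE, Set.indicator_apply, Finset.sum_boole]

section AggregatedPValues

variable {ι Ω : Type*} {B : ℕ} {p : Finset ι → Fin B → Ω → ℝ} {C : Finset ι} {ω : Ω}

lemma Qagg_nonneg {γ : ℝ} (hγ : 0 < γ) (hB : 0 < B) (hp : ∀ b, 0 ≤ p C b ω) :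
    0 ≤ Qagg p γ C ω :=
  le_min zero_le_one (empQuantile_nonneg hγ hB fun b => div_nonneg (hp b) hγ.le)

lemma ceil_le_countLE_of_Qagg_lt {γ v : ℝ} (hγ : 0 < γ) (hγ1 : γ ≤ 1) (hB : 0 < B)
    (hv0 : 0 ≤ v) (hv1 : v ≤ 1) (h : Qagg p γ C ω < v) :
    ⌈γ * B⌉₊ ≤ countLE (p C) (v * ⌈γ * B⌉₊ / B) ω := by
  have hq : empQuantile γ (fun b => p C b ω / γ) < v :=
    (min_lt_iff.mp h).resolve_left hv1.not_gt
  refine (ceil_le_card_of_empQuantile_lt hγ hγ1 hB hq).trans (card_le_card fun b hb => ?_)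
  simp only [mem_filter, mem_univ, true_and] at hb ⊢
  have hγk : γ ≤ ⌈γ * B⌉₊ / B := by
    rw [le_div_iff₀ (by exact_mod_cast hB)]
    exact Nat.le_ceil _
  calc p C b ω ≤ v * γ := (div_le_iff₀ hγ).mp hb
    _ ≤ v * (⌈γ * B⌉₊ / B) := by gcongr
    _ = v * ⌈γ * B⌉₊ / B := by ring

lemma exists_le_countLE_of_Pval_le {γmin α v : ℝ} (hB : 0 < B)
    (hγmin : γmin ∈ Set.Ioo (0 : ℝ) 1) (hp : ∀ b, 0 ≤ p C b ω) (hα1 : α < 1)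
    (hv : α / (1 - Real.log γmin) < v) (hv1 : v ≤ 1) (h : Pval p γmin C ω ≤ α) :
    ∃ k : ℕ, γmin * B < k ∧ k ≤ B ∧ k ≤ countLE (p C) (v * k / B) ω := by
  obtain ⟨hγ0, hγ1⟩ := hγmin
  have hL : 0 < 1 - Real.log γmin := by linarith [Real.log_neg hγ0 hγ1]
  have hinf : sInf ((fun γ => Qagg p γ C ω) '' Set.Ioo γmin 1) < v := by
    have hmul := (min_le_iff.mp h).resolve_left hα1.not_ge
    rw [← le_div_iff₀' hL] at hmul
    exact hmul.trans_lt hv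
  have hbdd : BddBelow ((fun γ => Qagg p γ C ω) '' Set.Ioo γmin 1) := by
    refine ⟨0, ?_⟩
    rintro _ ⟨γ, hγ, rfl⟩
    exact Qagg_nonneg (hγ0.trans hγ.1) hB hp
  obtain ⟨_, ⟨γ, ⟨hγminγ, hγ1'⟩, rfl⟩, hQ⟩ :=
    (csInf_lt_iff hbdd ((Set.nonempty_Ioo.mpr hγ1).image _)).mp hinf
  have hγ : 0 < γ := hγ0.trans hγminγ
  have hB' : (0 : ℝ) < B := by exact_mod_cast hB
  refine ⟨⌈γ * B⌉₊, ?_, ?_, ceil_le_countLE_of_Qagg_lt hγ hγ1'.le hB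
    ((Qagg_nonneg hγ hB hp).trans hQ.le) hv1 hQ⟩
  · exact (mul_lt_mul_of_pos_right hγminγ hB').trans_le (Nat.le_ceil _)
  · exact Nat.ceil_le.mpr (mul_le_of_le_one_left hB'.le hγ1'.le)

end AggregatedPValues

section Markov

variable {Ω : Type*} [MeasurableSpace Ω] {μ : Measure Ω} [IsFiniteMeasure μ]

lemma integrable_countLE {β : Type*} [Fintype β] {X : β → Ω → ℝ}
    (hX : ∀ b, Measurable (X b)) (t : ℝ) : Integrable (fun ω => (countLE X t ω : ℝ)) μ := by
  simp_rw [countLE_eq_sum_indicator]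
  exact integrable_finsetSum _ fun b _ =>
    (integrable_const 1).indicator (measurableSet_le (hX b) measurable_const)

lemma integral_countLE {β : Type*} [Fintype β] {X : β → Ω → ℝ}
    (hX : ∀ b, Measurable (X b)) (t : ℝ) :
    ∫ ω, (countLE X t ω : ℝ) ∂μ = ∑ b, μ.real {ω | X b ω ≤ t} := by
  simp_rw [countLE_eq_sum_indicator]
  rw [integral_finsetSum _ fun b _ =>
    (integrable_const 1).indicator (measurableSet_le (hX b) measurable_const)]
  exact sum_congr rfl fun b _ => integral_indicator_one (measurableSet_le (hX b) measurable_const)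

lemma measureReal_le_of_forall_exists_le_countLE {B : ℕ} {X : Fin B → Ω → ℝ}
    (hX : ∀ b, Measurable (X b)) {v : ℝ} (hv : 0 ≤ v) {k₀ : ℕ} (hk₀ : 1 ≤ k₀) {S : Set Ω}
    (hS : ∀ ω ∈ S, ∃ k : ℕ, k₀ ≤ k ∧ k ≤ B ∧ k ≤ countLE X (v * k / B) ω) :
    μ.real S ≤ 1 / B * ∑ b, μ.real {ω | X b ω ≤ v}
      + ∑ j ∈ Ico k₀ B, 1 / ((j : ℝ) * (j + 1)) * ∑ b, μ.real {ω | X b ω ≤ v * j / B} := by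
  have hterm : ∀ c t : ℝ, Integrable (fun ω => c * (countLE X t ω : ℝ)) μ :=
    fun c t => (integrable_countLE hX t).const_mul c
  set f : Ω → ℝ := fun ω => 1 / B * (countLE X v ω : ℝ)
    + ∑ j ∈ Ico k₀ B, 1 / ((j : ℝ) * (j + 1)) * (countLE X (v * j / B) ω : ℝ)
  have hf_int : Integrable f μ := (hterm _ _).add (integrable_finsetSum _ fun _ _ => hterm _ _)
  have hf_nonneg : 0 ≤ᵐ[μ] f := Filter.Eventually.of_forall fun ω => by positivity
  have hSf : S ⊆ {ω | 1 ≤ f ω} := fun ω hω => by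
    obtain ⟨k, hk₀k, hkB, hk⟩ := hS ω hω
    exact one_le_weighted_sum_of_le (fun _ _ h => by exact_mod_cast countLE_mono X ω h)
      (fun _ => Nat.cast_nonneg _) hv hk₀ hk₀k hkB (by exact_mod_cast hk)
  calc μ.real S ≤ 1 * μ.real {ω | 1 ≤ f ω} := by rw [one_mul]; exact measureReal_mono hSf
    _ ≤ ∫ ω, f ω ∂μ := mul_meas_ge_le_integral_of_nonneg hf_nonneg hf_int 1
    _ = _ := by
      rw [integral_add (hterm _ _) (integrable_finsetSum _ fun _ _ => hterm _ _),
        integral_finsetSum _ fun _ _ => hterm _ _]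
      simp only [integral_const_mul, integral_countLE hX]

end Markov

section FamilyBound

variable {Ω κ : Type*} [MeasurableSpace Ω] {μ : Measure Ω} [IsFiniteMeasure μ]

lemma sum_measureReal_le_of_superuniform (s : Finset κ) {B : ℕ} (hB : 0 < B)
    {X : κ → Fin B → Ω → ℝ} (hX : ∀ i ∈ s, ∀ b, Measurable (X i b))
    (hsuper : ∀ b, ∀ t ∈ Set.Ioo (0 : ℝ) 1, ∑ i ∈ s, μ.real {ω | X i b ω ≤ t} ≤ t)
    {v : ℝ} (hv : v ∈ Set.Ioo (0 : ℝ) 1) {k₀ : ℕ} (hk₀ : 1 ≤ k₀) (S : κ → Set Ω)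
    (hS : ∀ i ∈ s, ∀ ω ∈ S i, ∃ k : ℕ, k₀ ≤ k ∧ k ≤ B ∧ k ≤ countLE (X i) (v * k / B) ω) :
    ∑ i ∈ s, μ.real (S i) ≤ v * (1 + ∑ j ∈ Ico k₀ B, 1 / ((j : ℝ) + 1)) := by
  have hB' : (0 : ℝ) < B := by exact_mod_cast hB
  have hlevel : ∀ j ∈ Ico k₀ B, v * j / B ∈ Set.Ioo (0 : ℝ) 1 := fun j hj => by
    have hj0 : (0 : ℝ) < j := by exact_mod_cast hk₀.trans (mem_Ico.mp hj).1
    have hjB : (j : ℝ) < B := by exact_mod_cast (mem_Ico.mp hj).2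
    refine ⟨by have := hv.1; positivity, ?_⟩
    rw [div_lt_one hB']
    nlinarith [hv.1, hv.2]
  calc ∑ i ∈ s, μ.real (S i)
      ≤ ∑ i ∈ s, (1 / B * ∑ b, μ.real {ω | X i b ω ≤ v}
          + ∑ j ∈ Ico k₀ B, 1 / ((j : ℝ) * (j + 1)) * ∑ b, μ.real {ω | X i b ω ≤ v * j / B}) :=
        sum_le_sum fun i hi =>
          measureReal_le_of_forall_exists_le_countLE (hX i hi) hv.1.le hk₀ (hS i hi)
    _ = 1 / B * ∑ b, ∑ i ∈ s, μ.real {ω | X i b ω ≤ v}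
          + ∑ j ∈ Ico k₀ B, 1 / ((j : ℝ) * (j + 1))
              * ∑ b, ∑ i ∈ s, μ.real {ω | X i b ω ≤ v * j / B} := by
        rw [sum_add_distrib, ← mul_sum, sum_comm (s := s), sum_comm (s := s)]
        congr 1
        refine sum_congr rfl fun j _ => ?_
        rw [← mul_sum, sum_comm]
    _ ≤ 1 / B * ∑ _b : Fin B, v
          + ∑ j ∈ Ico k₀ B, 1 / ((j : ℝ) * (j + 1)) * ∑ _b : Fin B, v * j / B := by
        gcongr with b _ j hj b
        · exact hsuper b v hv
        · exact hsuper b _ (hlevel j hj)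
    _ = v * (1 + ∑ j ∈ Ico k₀ B, 1 / ((j : ℝ) + 1)) := by
        simp only [sum_const, card_univ, Fintype.card_fin, nsmul_eq_mul, mul_add, mul_sum]
        congr 1
        · field_simp
        · refine sum_congr rfl fun j hj => ?_
          have hj0 : (0 : ℝ) < j := by exact_mod_cast hk₀.trans (mem_Ico.mp hj).1
          field_simp

end FamilyBound

lemma le_of_forall_mem_Ioo_le {f : ℝ → ℝ} (hf : Continuous f) {a b x : ℝ} (hab : a < b)
    (h : ∀ v ∈ Set.Ioo a b, x ≤ f v) : x ≤ f a := by
  have hclosed : IsClosed {v | x ≤ f v} := isClosed_le continuous_const hf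
  refine hclosed.closure_subset_iff.mpr h ?_
  rw [closure_Ioo hab.ne]
  exact Set.left_mem_Icc.mpr hab.le

lemma sum_measure_setOf_Pval_le {ι Ω : Type*} [MeasurableSpace Ω] (μ : Measure Ω)
    [IsFiniteMeasure μ] (s : Finset (Finset ι)) {B : ℕ} (hB : 0 < B)
    {p : Finset ι → Fin B → Ω → ℝ} (hmeas : ∀ C ∈ s, ∀ b, Measurable (p C b))
    (hp : ∀ C ∈ s, ∀ b ω, 0 ≤ p C b ω)
    (hsuper : ∀ b, ∀ t ∈ Set.Ioo (0 : ℝ) 1,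
      ∑ C ∈ s, μ {ω | p C b ω ≤ t} ≤ ENNReal.ofReal t)
    {γmin : ℝ} (hγmin : γmin ∈ Set.Ioo (0 : ℝ) 1) {α : ℝ} (hα : α ∈ Set.Ioo (0 : ℝ) 1) :
    ∑ C ∈ s, μ {ω | Pval p γmin C ω ≤ α} ≤ ENNReal.ofReal α := by
  have hsuper' : ∀ b, ∀ t ∈ Set.Ioo (0 : ℝ) 1, ∑ C ∈ s, μ.real {ω | p C b ω ≤ t} ≤ t :=
    fun b t ht => by
      simp only [measureReal_def]
      rw [← ENNReal.toReal_sum fun _ _ => measure_ne_top _ _]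
      exact ENNReal.toReal_le_of_le_ofReal ht.1.le (hsuper b t ht)
  set L := 1 - Real.log γmin
  have hL : 1 < L := by linarith [Real.log_neg hγmin.1 hγmin.2]
  have hB' : (0 : ℝ) < B := by exact_mod_cast hB
  set k₀ := ⌊γmin * B⌋₊ + 1
  have hk₀ : γmin * B < k₀ := by simpa [k₀] using Nat.lt_floor_add_one (γmin * B)
  have hγB : 0 ≤ γmin * B := mul_nonneg hγmin.1.le hB'.le
  have hk₀B : k₀ ≤ B := (Nat.floor_lt hγB).mpr (by nlinarith [hγmin.2])
  have hbound : ∀ v ∈ Set.Ioo (α / L) 1,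
      ∑ C ∈ s, μ.real {ω | Pval p γmin C ω ≤ α} ≤ v * L := fun v hv => by
    have hv0 : 0 < v := (div_pos hα.1 (by linarith)).trans hv.1
    calc ∑ C ∈ s, μ.real {ω | Pval p γmin C ω ≤ α}
        ≤ v * (1 + ∑ j ∈ Ico k₀ B, 1 / ((j : ℝ) + 1)) :=
          sum_measureReal_le_of_superuniform s hB hmeas hsuper' ⟨hv0, hv.2⟩
            (Nat.le_add_left 1 _) _ fun C hC ω hω => by
              obtain ⟨k, hk, hkB, hcount⟩ :=
                exists_le_countLE_of_Pval_le hB hγmin (fun b => hp C hC b ω) hα.2 hv.1 hv.2.le hω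
              exact ⟨k, (Nat.floor_lt hγB).mpr hk, hkB, hcount⟩
      _ ≤ v * L := by gcongr; exact one_add_sum_Ico_one_div_succ_le hγmin.1 hk₀ hk₀B
  have hreal : ∑ C ∈ s, μ.real {ω | Pval p γmin C ω ≤ α} ≤ α := by
    have := le_of_forall_mem_Ioo_le (f := fun v => v * L) (by fun_prop)
      ((div_lt_one (by linarith)).mpr (by linarith [hα.2])) hbound
    rwa [div_mul_cancel₀ _ (by linarith)] at this
  calc ∑ C ∈ s, μ {ω | Pval p γmin C ω ≤ α}
      = ENNReal.ofReal (∑ C ∈ s, μ.real {ω | Pval p γmin C ω ≤ α}) := by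
        rw [ENNReal.ofReal_sum_of_nonneg fun _ _ => measureReal_nonneg]
        exact (sum_congr rfl fun _ _ => ofReal_measureReal).symm
    _ ≤ ENNReal.ofReal α := ENNReal.ofReal_le_ofReal hreal

section Hierarchy

variable {ι : Type*} [DecidableEq ι] {𝒯 : Finset (Finset ι)} {S₀ : Finset ι}

lemma mem_of_mem_maxNullClusters {D : Finset ι} (hD : D ∈ maxNullClusters 𝒯 S₀) : D ∈ 𝒯 :=
  (mem_filter.mp (mem_filter.mp hD).1).1

lemma exists_mem_maxNullClusters_superset {C : Finset ι} (hC : C ∈ nullClusters 𝒯 S₀) :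
    ∃ D ∈ maxNullClusters 𝒯 S₀, C ⊆ D := by
  obtain ⟨D, hD, hmax⟩ := exists_max_image ((nullClusters 𝒯 S₀).filter (C ⊆ ·)) card
    ⟨C, mem_filter.mpr ⟨hC, subset_rfl⟩⟩
  obtain ⟨hDnull, hCD⟩ := mem_filter.mp hD
  refine ⟨D, mem_filter.mpr ⟨hDnull, fun D' hD' hDD' => ?_⟩, hCD⟩
  exact (hmax D' (mem_filter.mpr ⟨hD', hCD.trans hDD'.subset⟩)).not_gt (card_lt_card hDD')

lemma setOf_exists_Phier_le_subset {Ω : Type*} {B : ℕ} (p : Finset ι → Fin B → Ω → ℝ)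
    (γmin α : ℝ) :
    {ω | ∃ C ∈ nullClusters 𝒯 S₀, Phier 𝒯 p γmin C ω ≤ α}
      ⊆ ⋃ D ∈ maxNullClusters 𝒯 S₀, {ω | Pval p γmin D ω ≤ α} := by
  rintro ω ⟨C, hC, hPh⟩
  obtain ⟨D, hD, hCD⟩ := exists_mem_maxNullClusters_superset hC
  refine Set.mem_biUnion hD (le_trans ?_ hPh)
  exact le_sup' (fun D => Pval p γmin D ω)
    (mem_insert_of_mem (mem_filter.mpr ⟨mem_of_mem_maxNullClusters hD, hCD⟩))

end Hierarchy

theorem fwer_control_Phier_general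
    {ι : Type*} [DecidableEq ι] {Ω : Type*} [MeasurableSpace Ω]
    (ℙ : Measure Ω) [IsProbabilityMeasure ℙ]
    (S₀ : Finset ι) (𝒯 : Finset (Finset ι))
    {B : ℕ} (hB : 1 ≤ B) (p : Finset ι → Fin B → Ω → ℝ)
    (hmeas : ∀ C ∈ 𝒯, ∀ b : Fin B, Measurable (p C b))
    (hp01 : ∀ C ∈ 𝒯, ∀ (b : Fin B) (ω : Ω), p C b ω ∈ Set.Icc (0 : ℝ) 1)
    {δ : ℝ} (hδ : δ ∈ Set.Ioo (0 : ℝ) 1)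
    (A : Set Ω) (hA : MeasurableSet A)
    (hPA : ENNReal.ofReal ((1 - δ) ^ B) ≤ ℙ A)
    (hsuper : ∀ b : Fin B, ∀ t ∈ Set.Ioo (0 : ℝ) 1,
      ∑ C ∈ maxNullClusters 𝒯 S₀, ℙ ({ω | p C b ω ≤ t} ∩ A) ≤ ENNReal.ofReal t)
    {γmin : ℝ} (hγmin : γmin ∈ Set.Ioo (0 : ℝ) 1)
    {α : ℝ} (hα : α ∈ Set.Ioo (0 : ℝ) 1) :
    ℙ {ω | ∃ C ∈ nullClusters 𝒯 S₀, Phier 𝒯 p γmin C ω ≤ α}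
        ≤ ENNReal.ofReal (α + 1 - (1 - δ) ^ B)
      ∧ α + 1 - (1 - δ) ^ B ≤ α + B * δ := by
  have h1δ : 0 ≤ 1 - δ := by linarith [hδ.2]
  have hpow : 0 ≤ (1 - δ) ^ B := pow_nonneg h1δ B
  have hpow1 : (1 - δ) ^ B ≤ 1 := pow_le_one₀ h1δ (by linarith [hδ.1])
  refine ⟨?_, by linarith [one_add_mul_sub_le_pow (a := 1 - δ) (by linarith) B]⟩
  have hnull : ∑ D ∈ maxNullClusters 𝒯 S₀, ℙ.restrict A {ω | Pval p γmin D ω ≤ α}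
      ≤ ENNReal.ofReal α := by
    refine sum_measure_setOf_Pval_le _ _ hB
      (fun D hD => hmeas D (mem_of_mem_maxNullClusters hD))
      (fun D hD b ω => (hp01 D (mem_of_mem_maxNullClusters hD) b ω).1) ?_ hγmin hα
    simpa only [Measure.restrict_apply' hA] using hsuper
  have hAc : ℙ Aᶜ ≤ ENNReal.ofReal (1 - (1 - δ) ^ B) := by
    rw [prob_compl_eq_one_sub hA, ENNReal.ofReal_sub _ hpow, ENNReal.ofReal_one]
    exact tsub_le_tsub_left hPA 1
  set E := {ω | ∃ C ∈ nullClusters 𝒯 S₀, Phier 𝒯 p γmin C ω ≤ α}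
  calc ℙ E ≤ ℙ.restrict A E + ℙ Aᶜ := by
        rw [Measure.restrict_apply' hA]
        grw [measure_le_inter_add_sdiff ℙ E A, Set.sdiff_subset_compl E A]
    _ ≤ ∑ D ∈ maxNullClusters 𝒯 S₀, ℙ.restrict A {ω | Pval p γmin D ω ≤ α} + ℙ Aᶜ := by
        gcongr
        exact (measure_mono (setOf_exists_Phier_le_subset p γmin α)).trans
          (measure_biUnion_finset_le _ _)
    _ ≤ ENNReal.ofReal α + ENNReal.ofReal (1 - (1 - δ) ^ B) := add_le_add hnull hAc
    _ = ENNReal.ofReal (α + 1 - (1 - δ) ^ B) := by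
        rw [← ENNReal.ofReal_add hα.1.le (by linarith)]
        ring_nf

/-- **FWER control of the hierarchically adjusted γ-free p-values `P_h^C`**
(Theorem 1, part 2, of Mandozzi–Bühlmann). -/
theorem fwer_control_Phier
    {ι : Type*} [DecidableEq ι] {Ω : Type*} [MeasurableSpace Ω]
    (ℙ : Measure Ω) [IsProbabilityMeasure ℙ]
    (V S₀ : Finset ι) (𝒯 : Finset (Finset ι))
    (h𝒯 : IsHierarchy V 𝒯) (hS₀ : S₀ ⊆ V)
    {B : ℕ} (hB : 1 ≤ B) (p : Finset ι → Fin B → Ω → ℝ)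
    (hmeas : ∀ C ∈ 𝒯, ∀ b : Fin B, Measurable (p C b))
    (hp01 : ∀ C ∈ 𝒯, ∀ (b : Fin B) (ω : Ω), p C b ω ∈ Set.Icc (0 : ℝ) 1)
    {δ : ℝ} (hδ : δ ∈ Set.Ioo (0 : ℝ) 1)
    (A : Set Ω) (hA : MeasurableSet A)
    (hPA : ENNReal.ofReal ((1 - δ) ^ B) ≤ ℙ A)
    (hsuper : ∀ b : Fin B, ∀ t ∈ Set.Ioo (0 : ℝ) 1,
      ∑ C ∈ maxNullClusters 𝒯 S₀, ℙ ({ω | p C b ω ≤ t} ∩ A) ≤ ENNReal.ofReal t)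
    {γmin : ℝ} (hγmin : γmin ∈ Set.Ioo (0 : ℝ) 1)
    {α : ℝ} (hα : α ∈ Set.Ioo (0 : ℝ) 1) :
    ℙ {ω | ∃ C ∈ nullClusters 𝒯 S₀, Phier 𝒯 p γmin C ω ≤ α}
        ≤ ENNReal.ofReal (α + 1 - (1 - δ) ^ B)
      ∧ α + 1 - (1 - δ) ^ B ≤ α + B * δ :=
  fwer_control_Phier_general ℙ S₀ 𝒯 hB p hmeas hp01 hδ A hA hPA hsuper hγmin hα
end

section
/- Let (Ω, ℱ, ℙ) be a probability space, 𝒢 ⊆ ℱ a sub-σ-algebra, 𝒯 a binary hierarchy on a finite set V, S₀ ⊆ V, and 𝒯̃₀ the maximal null clusters. Let Ŝ : Ω → 𝒫(V) be a 𝒢-measurable random subset with Ŝ(ω) ≠ ∅ almost surely. For each C ∈ 𝒯̃₀ let p^C : Ω → [0,1] be a random variable such that p^C = 1 on the event {C ∩ Ŝ = ∅} and, for every t ∈ [0,1], ℙ(p^C ≤ t | 𝒢) ≤ t almost surely on the event {C ∩ Ŝ ≠ ∅}. Define the Shaffer-adjusted p-values p_adj^C = min{1, p^C · |Ŝ| /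 |C|_eff^{Ŝ}} on {C ∩ Ŝ ≠ ∅} and p_adj^C = 1 on {C ∩ Ŝ = ∅}. Then for every t ∈ (0,1): ∑_{C ∈ 𝒯̃₀} ℙ(p_adj^C ≤ t) ≤ t. -/
open MeasureTheory Finset

/-- The children of a cluster `C` in the hierarchy `𝒯`: the clusters whose parent
(smallest member of `𝒯` strictly containing them) is `C`. -/
def children {ι : Type*} [DecidableEq ι] (𝒯 : Finset (Finset ι)) (C : Finset ι) :
    Finset (Finset ι) :=
  𝒯.filter (fun D => D ⊂ C ∧ ∀ E ∈ 𝒯, D ⊂ E → C ⊆ E)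

/-- The siblings of a cluster `C`: the children of the parent of `C` other than `C`. -/
def siblings {ι : Type*} [DecidableEq ι] (𝒯 : Finset (Finset ι)) (C : Finset ι) :
    Finset (Finset ι) :=
  (𝒯.filter (fun P => C ∈ children 𝒯 P)).biUnion (fun P => (children 𝒯 P).erase C)

/-- The children of the siblings of `C` (as a collection of clusters, empty if `C` has
no parent). -/
def childrenOfSiblings {ι : Type*} [DecidableEq ι] (𝒯 : Finset (Finset ι)) (C : Finset ι) :
    Finset (Finset ι) :=
  (siblings 𝒯 C).biUnion (fun D => children 𝒯 D)

/-- The hierarchy `𝒯` is binary: every non-minimal cluster has exactly two children,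
which are disjoint with union the cluster itself. -/
def IsBinary {ι : Type*} [DecidableEq ι] (𝒯 : Finset (Finset ι)) : Prop :=
  ∀ C ∈ 𝒯, (∃ D ∈ 𝒯, D ⊂ C) →
    ∃ D₁ ∈ 𝒯, ∃ D₂ ∈ 𝒯, D₁ ≠ D₂ ∧ children 𝒯 C = {D₁, D₂} ∧
      D₁ ∩ D₂ = ∅ ∧ D₁ ∪ D₂ = C

/-- The effective cluster size of `C` restricted to the screened set `Shat`:
`|C ∩ Shat|` if some child of a sibling of `C` meets `Shat`, and
`|C ∩ Shat| + |(⋃ si(C)) ∩ Shat|` otherwise. -/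
def effSize {ι : Type*} [DecidableEq ι] (𝒯 : Finset (Finset ι)) (Shat : Finset ι)
    (C : Finset ι) : ℕ :=
  if ∃ E ∈ childrenOfSiblings 𝒯 C, (E ∩ Shat).Nonempty then (C ∩ Shat).card
  else (C ∩ Shat).card + (((siblings 𝒯 C).biUnion id) ∩ Shat).card


section Comb
variable {ι : Type*} [DecidableEq ι] {V S₀ : Finset ι} {𝒯 : Finset (Finset ι)}

lemma mem_children_iff {C D : Finset ι} :
    D ∈ children 𝒯 C ↔ D ∈ 𝒯 ∧ D ⊂ C ∧ ∀ E ∈ 𝒯, D ⊂ E → C ⊆ E := by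
  simp [children, and_assoc]

lemma parent_unique {C P P' : Finset ι} (hP : P ∈ 𝒯) (hP' : P' ∈ 𝒯)
    (h1 : C ∈ children 𝒯 P) (h2 : C ∈ children 𝒯 P') : P = P' := by
  rw [mem_children_iff] at h1 h2
  exact Finset.Subset.antisymm (h1.2.2 P' hP' h2.2.1) (h2.2.2 P hP h1.2.1)

lemma parent_exists (h𝒯 : IsHierarchy V 𝒯) {C : Finset ι} (hC : C ∈ 𝒯) (hCV : C ≠ V) :
    ∃ P ∈ 𝒯, C ∈ children 𝒯 P := by
  obtain ⟨hV, hsub, hnest⟩ := h𝒯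
  set 𝒮 := 𝒯.filter (fun E => C ⊂ E) with h𝒮
  have hVS : V ∈ 𝒮 := by
    simp only [h𝒮, mem_filter]
    exact ⟨hV, lt_of_le_of_ne (hsub C hC).2 hCV⟩
  obtain ⟨P, hP𝒮, hPmin⟩ := 𝒮.exists_min_image Finset.card ⟨V, hVS⟩
  simp only [h𝒮, mem_filter] at hP𝒮
  refine ⟨P, hP𝒮.1, ?_⟩
  rw [mem_children_iff]
  refine ⟨hC, hP𝒮.2, fun E hE hCE => ?_⟩
  have hE𝒮 : E ∈ 𝒮 := by simp only [h𝒮, mem_filter]; exact ⟨hE, hCE⟩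
  rcases hnest P hP𝒮.1 E hE with h | h | h
  · exact h
  · have : E = P := Finset.eq_of_subset_of_card_le h (hPmin E hE𝒮)
    exact this ▸ le_rfl
  · exfalso
    obtain ⟨x, hx⟩ := (hsub C hC).1
    have : x ∈ P ∩ E := Finset.mem_inter.mpr ⟨hP𝒮.2.1 hx, hCE.1 hx⟩
    simp [h] at this

/-- structure of the sibling set when `C` has a parent. -/
lemma siblings_eq (hbin : IsBinary 𝒯) {C P : Finset ι} (hP : P ∈ 𝒯)
    (hCP : C ∈ children 𝒯 P) :
    ∃ D ∈ 𝒯, siblings 𝒯 C = {D} ∧ D ∈ children 𝒯 P ∧ D ≠ C ∧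
      C ∩ D = ∅ ∧ C ∪ D = P := by
  have hC𝒯 : C ∈ 𝒯 := (mem_children_iff.mp hCP).1
  have hCltP : C ⊂ P := (mem_children_iff.mp hCP).2.1
  obtain ⟨D₁, hD₁, D₂, hD₂, hne, hch, hdisj, hun⟩ := hbin P hP ⟨C, hC𝒯, hCltP⟩
  have hCmem : C ∈ ({D₁, D₂} : Finset (Finset ι)) := hch ▸ hCP
  have hfilter : 𝒯.filter (fun P' => C ∈ children 𝒯 P') = {P} := by
    apply Finset.eq_singleton_iff_unique_mem.mpr
    constructor
    · exact Finset.mem_filter.mpr ⟨hP, hCP⟩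
    · intro P' hP'
      simp only [Finset.mem_filter] at hP'
      exact (parent_unique hP'.1 hP hP'.2 hCP)
  have hsib : siblings 𝒯 C = (children 𝒯 P).erase C := by
    rw [siblings, hfilter, Finset.singleton_biUnion]
  rcases Finset.mem_insert.mp hCmem with rfl | hC2
  · refine ⟨D₂, hD₂, ?_, ?_, ?_, hdisj, hun⟩
    · rw [hsib, hch, Finset.erase_insert (by simp [hne])]
    · rw [hch]; simp
    · exact fun h => hne h.symm
  · have hC2' : C = D₂ := Finset.mem_singleton.mp hC2
    subst hC2'
    refine ⟨D₁, hD₁, ?_, ?_, ?_, ?_, ?_⟩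
    · rw [hsib, hch, Finset.pair_comm, Finset.erase_insert (by simp [hne.symm])]
    · rw [hch]; simp
    · exact hne
    · rw [Finset.inter_comm]; exact hdisj
    · rw [Finset.union_comm]; exact hun


lemma mem_maxNull {C : Finset ι} (hC : C ∈ maxNullClusters 𝒯 S₀) :
    C ∈ 𝒯 ∧ C ∩ S₀ = ∅ ∧ ∀ D ∈ 𝒯, D ∩ S₀ = ∅ → ¬ C ⊂ D := by
  have h1 := Finset.mem_filter.mp hC
  have h2 := Finset.mem_filter.mp h1.1
  exact ⟨h2.1, h2.2, fun D hD hD0 => h1.2 D (Finset.mem_filter.mpr ⟨hD, hD0⟩)⟩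

lemma maxNull_inter_empty (h𝒯 : IsHierarchy V 𝒯) {C C' : Finset ι}
    (hC : C ∈ maxNullClusters 𝒯 S₀) (hC' : C' ∈ maxNullClusters 𝒯 S₀)
    (hne : C ≠ C') : C ∩ C' = ∅ := by
  obtain ⟨hC𝒯, hC0, hCmax⟩ := mem_maxNull hC
  obtain ⟨hC'𝒯, hC'0, hC'max⟩ := mem_maxNull hC'
  rcases h𝒯.2.2 C hC𝒯 C' hC'𝒯 with h | h | h
  · exact absurd (ssubset_of_subset_of_ne h hne) (hCmax C' hC'𝒯 hC'0)
  · exact absurd (ssubset_of_subset_of_ne h hne.symm) (hC'max C hC𝒯 hC0)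
  · exact h

lemma siblings_of_no_parent {C : Finset ι} (h : ∀ P ∈ 𝒯, C ∉ children 𝒯 P) :
    siblings 𝒯 C = ∅ := by
  rw [siblings]
  have : 𝒯.filter (fun P => C ∈ children 𝒯 P) = ∅ :=
    Finset.filter_eq_empty_iff.mpr (fun {P} hP => h P hP)
  rw [this, Finset.biUnion_empty]

lemma extra_struct (h𝒯 : IsHierarchy V 𝒯) (hbin : IsBinary 𝒯) {C : Finset ι}
    (hC : C ∈ maxNullClusters 𝒯 S₀) (Sh : Finset ι)
    (hno : ¬ ∃ E ∈ childrenOfSiblings 𝒯 C, (E ∩ Sh).Nonempty)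
    (hne : (((siblings 𝒯 C).biUnion id) ∩ Sh).Nonempty) :
    ∃ D ∈ 𝒯, siblings 𝒯 C = {D} ∧ (D ∩ S₀).Nonempty ∧ (∀ E ∈ 𝒯, ¬ E ⊂ D) ∧
      C ∩ D = ∅ ∧ ∃ P ∈ 𝒯, C ∈ children 𝒯 P ∧ D ∈ children 𝒯 P := by
  obtain ⟨hC𝒯, hC0, hCmax⟩ := mem_maxNull hC
  -- C has a parent
  have hCV : C ≠ V := by
    rintro rfl
    have : siblings 𝒯 C = ∅ := by
      apply siblings_of_no_parent
      intro P hP hmem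
      exact absurd ((mem_children_iff.mp hmem).2.1).2
        (fun h => (mem_children_iff.mp hmem).2.1.2 (h𝒯.2.1 P hP).2)
    rw [this] at hne
    simp at hne
  obtain ⟨P, hP, hCP⟩ := parent_exists h𝒯 hC𝒯 hCV
  obtain ⟨D, hD𝒯, hsib, hDP, hDC, hCDdisj, hCDun⟩ := siblings_eq hbin hP hCP
  have hextra : ((siblings 𝒯 C).biUnion id) = D := by
    rw [hsib, Finset.singleton_biUnion]; rfl
  rw [hextra] at hne
  have hcs : childrenOfSiblings 𝒯 C = children 𝒯 D := by
    rw [childrenOfSiblings, hsib, Finset.singleton_biUnion]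
  -- D is minimal
  have hDmin : ∀ E ∈ 𝒯, ¬ E ⊂ D := by
    intro E hE hED
    obtain ⟨E₁, hE₁, E₂, hE₂, hEne, hEch, hEdisj, hEun⟩ := hbin D hD𝒯 ⟨E, hE, hED⟩
    have h1 : E₁ ∩ Sh = ∅ := by
      by_contra h
      exact hno ⟨E₁, by rw [hcs, hEch]; simp, Finset.nonempty_iff_ne_empty.mpr h⟩
    have h2 : E₂ ∩ Sh = ∅ := by
      by_contra h
      exact hno ⟨E₂, by rw [hcs, hEch]; simp, Finset.nonempty_iff_ne_empty.mpr h⟩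
    have : D ∩ Sh = ∅ := by
      rw [← hEun, Finset.union_inter_distrib_right, h1, h2, Finset.union_empty]
    rw [this] at hne
    simp at hne
  -- D is not null
  have hDS₀ : (D ∩ S₀).Nonempty := by
    rw [Finset.nonempty_iff_ne_empty]
    intro h0
    have hPnull : P ∩ S₀ = ∅ := by
      rw [← hCDun, Finset.union_inter_distrib_right, hC0, h0, Finset.union_empty]
    exact hCmax P hP hPnull (mem_children_iff.mp hCP).2.1
  exact ⟨D, hD𝒯, hsib, hDS₀, hDmin, hCDdisj, P, hP, hCP, hDP⟩

lemma sum_eff_le (h𝒯 : IsHierarchy V 𝒯) (hbin : IsBinary 𝒯) (Sh : Finset ι) :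
    ∑ C ∈ (maxNullClusters 𝒯 S₀).filter (fun C => (C ∩ Sh).Nonempty),
      effSize 𝒯 Sh C ≤ Sh.card := by
  classical
  set F := (maxNullClusters 𝒯 S₀).filter (fun C => (C ∩ Sh).Nonempty) with hF
  set ex : Finset ι → Finset ι := fun C =>
    if ∃ E ∈ childrenOfSiblings 𝒯 C, (E ∩ Sh).Nonempty then (∅ : Finset ι)
    else ((siblings 𝒯 C).biUnion id) ∩ Sh with hex
  set g : Finset ι → Finset ι := fun C => (C ∩ Sh) ∪ ex C with hg
  have hFmax : ∀ C ∈ F, C ∈ maxNullClusters 𝒯 S₀ := fun C hC => (Finset.mem_filter.mp hC).1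
  -- structure on nonempty extras
  have hstruct : ∀ C ∈ maxNullClusters 𝒯 S₀, (ex C).Nonempty →
      ∃ D ∈ 𝒯, ex C = D ∩ Sh ∧ (D ∩ S₀).Nonempty ∧ (∀ E ∈ 𝒯, ¬ E ⊂ D) ∧
        C ∩ D = ∅ ∧ ∃ P ∈ 𝒯, C ∈ children 𝒯 P ∧ D ∈ children 𝒯 P := by
    intro C hC hnee
    have hcond : ¬ ∃ E ∈ childrenOfSiblings 𝒯 C, (E ∩ Sh).Nonempty := by
      intro h
      rw [hex] at hnee
      simp only [if_pos h] at hnee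
      exact Finset.not_nonempty_empty hnee
    have hval : ex C = ((siblings 𝒯 C).biUnion id) ∩ Sh := by
      rw [hex]; simp only [if_neg hcond]
    obtain ⟨D, hD𝒯, hsib, hDS₀, hDmin, hCD, hparents⟩ :=
      extra_struct h𝒯 hbin hC Sh hcond (hval ▸ hnee)
    refine ⟨D, hD𝒯, ?_, hDS₀, hDmin, hCD, hparents⟩
    rw [hval, hsib, Finset.singleton_biUnion]; rfl
  -- C meets no other's extra
  have key1 : ∀ C ∈ maxNullClusters 𝒯 S₀, ∀ C' ∈ maxNullClusters 𝒯 S₀,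
      Disjoint C (ex C') := by
    intro C hC C' hC'
    rcases Finset.eq_empty_or_nonempty (ex C') with h | h
    · simp [h]
    obtain ⟨D', hD'𝒯, hval, hD'S₀, hD'min, hC'D', -⟩ := hstruct C' hC' h
    have hCD' : C ∩ D' = ∅ := by
      obtain ⟨hC𝒯, hC0, hCmax⟩ := mem_maxNull hC
      rcases h𝒯.2.2 C hC𝒯 D' hD'𝒯 with hh | hh | hh
      · exfalso
        have hne : C ≠ D' := by
          rintro rfl
          rw [hC0] at hD'S₀
          exact Finset.not_nonempty_empty hD'S₀
        exact hD'min C hC𝒯 (ssubset_of_subset_of_ne hh hne)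
      · exfalso
        have : D' ∩ S₀ = ∅ := Finset.subset_empty.mp (hC0 ▸ Finset.inter_subset_inter_right hh)
        rw [this] at hD'S₀
        exact Finset.not_nonempty_empty hD'S₀
      · exact hh
    rw [hval]
    exact Finset.disjoint_left.mpr (fun {a} ha hmem => by
      have : a ∈ C ∩ D' := Finset.mem_inter.mpr ⟨ha, (Finset.mem_inter.mp hmem).1⟩
      simp [hCD'] at this)
  -- extras of distinct clusters are disjoint
  have key2 : ∀ C ∈ maxNullClusters 𝒯 S₀, ∀ C' ∈ maxNullClusters 𝒯 S₀, C ≠ C' →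
      Disjoint (ex C) (ex C') := by
    intro C hC C' hC' hne
    rcases Finset.eq_empty_or_nonempty (ex C) with h | h
    · simp [h]
    rcases Finset.eq_empty_or_nonempty (ex C') with h' | h'
    · simp [h']
    obtain ⟨D, hD𝒯, hval, hDS₀, hDmin, hCD, P, hP, hCP, hDP⟩ := hstruct C hC h
    obtain ⟨D', hD'𝒯, hval', hD'S₀, hD'min, hC'D', P', hP', hC'P', hD'P'⟩ := hstruct C' hC' h'
    have hDD' : D ∩ D' = ∅ := by
      rcases eq_or_ne D D' with rfl | hDne
      · -- same sibling: then same parent, and C = C', contradiction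
        exfalso
        have hPP' : P = P' := parent_unique hP hP' hDP hD'P'
        subst hPP'
        have hCssub : C ⊂ P := (mem_children_iff.mp hCP).2.1
        obtain ⟨D₁, hD₁, D₂, hD₂, hne12, hch, -, -⟩ :=
          hbin P hP ⟨C, (mem_children_iff.mp hCP).1, hCssub⟩
        have hCm : C ∈ ({D₁, D₂} : Finset (Finset ι)) := hch ▸ hCP
        have hC'm : C' ∈ ({D₁, D₂} : Finset (Finset ι)) := hch ▸ hC'P'
        have hDm : D ∈ ({D₁, D₂} : Finset (Finset ι)) := hch ▸ hDP
        have hCneD : C ≠ D := by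
          rintro rfl
          obtain ⟨-, hC0, -⟩ := mem_maxNull hC
          rw [hC0] at hDS₀
          exact Finset.not_nonempty_empty hDS₀
        have hC'neD : C' ≠ D := by
          rintro rfl
          obtain ⟨-, hC'0, -⟩ := mem_maxNull hC'
          rw [hC'0] at hDS₀
          exact Finset.not_nonempty_empty hDS₀
        simp only [Finset.mem_insert, Finset.mem_singleton] at hCm hC'm hDm
        rcases hDm with rfl | rfl
        · rcases hCm with rfl | rfl
          · exact hCneD rfl
          · rcases hC'm with rfl | rfl
            · exact hC'neD rfl
            · exact hne rfl
        · rcases hCm with rfl | rfl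
          · rcases hC'm with rfl | rfl
            · exact hne rfl
            · exact hC'neD rfl
          · exact hCneD rfl
      · rcases h𝒯.2.2 D hD𝒯 D' hD'𝒯 with hh | hh | hh
        · exact absurd (ssubset_of_subset_of_ne hh hDne) (hD'min D hD𝒯)
        · exact absurd (ssubset_of_subset_of_ne hh hDne.symm) (hDmin D' hD'𝒯)
        · exact hh
    rw [hval, hval']
    exact Finset.disjoint_left.mpr (fun {a} ha hmem => by
      have : a ∈ D ∩ D' := Finset.mem_inter.mpr
        ⟨(Finset.mem_inter.mp ha).1, (Finset.mem_inter.mp hmem).1⟩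
      simp [hDD'] at this)
  -- effSize = card (g C)
  have heff : ∀ C ∈ F, effSize 𝒯 Sh C = (g C).card := by
    intro C hC
    have hCdisj : Disjoint (C ∩ Sh) (ex C) :=
      Finset.disjoint_of_subset_left Finset.inter_subset_left
        (key1 C (hFmax C hC) C (hFmax C hC))
    rw [hg]
    simp only
    rw [Finset.card_union_of_disjoint hCdisj, effSize, hex]
    by_cases h : ∃ E ∈ childrenOfSiblings 𝒯 C, (E ∩ Sh).Nonempty
    · simp [if_pos h]
    · simp [if_neg h]
  -- g's are pairwise disjoint
  have hgdisj : ∀ C ∈ F, ∀ C' ∈ F, C ≠ C' → Disjoint (g C) (g C') := by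
    intro C hC C' hC' hne
    have hC0 := hFmax C hC; have hC'0 := hFmax C' hC'
    rw [hg]
    simp only
    rw [Finset.disjoint_union_left, Finset.disjoint_union_right,
      Finset.disjoint_union_right]
    refine ⟨⟨?_, ?_⟩, ⟨?_, ?_⟩⟩
    · have := maxNull_inter_empty h𝒯 hC0 hC'0 hne
      exact Finset.disjoint_left.mpr (fun {a} ha hmem => by
        have : a ∈ C ∩ C' := Finset.mem_inter.mpr
          ⟨(Finset.mem_inter.mp ha).1, (Finset.mem_inter.mp hmem).1⟩
        simp [maxNull_inter_empty h𝒯 hC0 hC'0 hne] at this)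
    · exact Finset.disjoint_of_subset_left Finset.inter_subset_left (key1 C hC0 C' hC'0)
    · exact (Finset.disjoint_of_subset_left Finset.inter_subset_left
        (key1 C' hC'0 C hC0)).symm
    · exact key2 C hC0 C' hC'0 hne
  calc ∑ C ∈ F, effSize 𝒯 Sh C = ∑ C ∈ F, (g C).card := Finset.sum_congr rfl heff
    _ = (F.biUnion g).card := (Finset.card_biUnion hgdisj).symm
    _ ≤ Sh.card := by
      apply Finset.card_le_card
      intro a ha
      obtain ⟨C, hC, hmem⟩ := Finset.mem_biUnion.mp ha
      rw [hg] at hmem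
      simp only [Finset.mem_union] at hmem
      rcases hmem with h | h
      · exact (Finset.mem_inter.mp h).2
      · rcases Finset.eq_empty_or_nonempty (ex C) with he | hne
        · simp [he] at h
        · obtain ⟨D, -, hval, -⟩ := hstruct C (hFmax C hC) hne
          rw [hval] at h
          exact (Finset.mem_inter.mp h).2


lemma effSize_pos {Sh C : Finset ι} (h : (C ∩ Sh).Nonempty) : 0 < effSize 𝒯 Sh C := by
  rw [effSize]
  split
  · exact Finset.card_pos.mpr h
  · exact lt_of_lt_of_le (Finset.card_pos.mpr h) (Nat.le_add_right _ _)

end Comb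

/-- **Validity of the Shaffer-adjusted p-values** (key step for Theorem 2 of
Mandozzi–Bühlmann): if the raw p-values are conditionally superuniform given the
σ-algebra `𝒢` of the screening, the Shaffer-adjusted p-values of the maximal null
clusters are summed-superuniform. -/
theorem shaffer_adjusted_superuniform
    {ι : Type*} [DecidableEq ι] {Ω : Type*} (𝒢 : MeasurableSpace Ω) [mΩ : MeasurableSpace Ω]
    (ℙ : Measure Ω) [IsProbabilityMeasure ℙ]
    (h𝒢 : 𝒢 ≤ mΩ)
    (V S₀ : Finset ι) (𝒯 : Finset (Finset ι))
    (h𝒯 : IsHierarchy V 𝒯) (hbin : IsBinary 𝒯) (hS₀ : S₀ ⊆ V)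
    (Shat : Ω → Finset ι) (hShatMeas : @Measurable Ω (Finset ι) 𝒢 ⊤ Shat)
    (hShatNe : ∀ᵐ ω ∂ℙ, (Shat ω).Nonempty)
    (p : Finset ι → Ω → ℝ)
    (hmeas : ∀ C ∈ maxNullClusters 𝒯 S₀, Measurable (p C))
    (hp01 : ∀ C ∈ maxNullClusters 𝒯 S₀, ∀ ω, p C ω ∈ Set.Icc (0 : ℝ) 1)
    (hpOne : ∀ C ∈ maxNullClusters 𝒯 S₀, ∀ ω, C ∩ Shat ω = ∅ → p C ω = 1)
    (hcond : ∀ C ∈ maxNullClusters 𝒯 S₀, ∀ t ∈ Set.Icc (0 : ℝ) 1,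
      ∀ᵐ ω ∂ℙ, (C ∩ Shat ω).Nonempty →
        (ℙ[Set.indicator {ω' | p C ω' ≤ t} (fun _ => (1 : ℝ)) | 𝒢]) ω ≤ t)
    (padj : Finset ι → Ω → ℝ)
    (hpadj : ∀ C ω, padj C ω =
      if (C ∩ Shat ω).Nonempty then
        min 1 (p C ω * (Shat ω).card / (effSize 𝒯 (Shat ω) C : ℝ))
      else 1)
    {t : ℝ} (ht : t ∈ Set.Ioo (0 : ℝ) 1) :
    ∑ C ∈ maxNullClusters 𝒯 S₀, ℙ {ω | padj C ω ≤ t} ≤ ENNReal.ofReal t := by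
  classical
  letI mΩ' : MeasurableSpace Ω := mΩ
  obtain ⟨ht0, ht1⟩ := ht
  have hpre : ∀ (A : Set (Finset ι)), MeasurableSet[𝒢] (Shat ⁻¹' A) :=
    fun A => hShatMeas trivial
  have hfmeas : ∀ (F : Finset ι → ENNReal), @Measurable Ω ENNReal mΩ _ (fun ω => F (Shat ω)) :=
    fun F s _ => h𝒢 _ (hpre (F ⁻¹' s))
  set f : Finset ι → Ω → ENNReal := fun C ω =>
    if (C ∩ Shat ω).Nonempty then
      ENNReal.ofReal (t * (effSize 𝒯 (Shat ω) C : ℝ) / ((Shat ω).card : ℝ)) else 0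
    with hfdef
  have hfC_meas : ∀ C, @Measurable Ω ENNReal mΩ _ (f C) := fun C =>
    hfmeas (fun S => if (C ∩ S).Nonempty then
      ENNReal.ofReal (t * (effSize 𝒯 S C : ℝ) / (S.card : ℝ)) else 0)
  -- Step A: per-cluster bound
  have stepA : ∀ C ∈ maxNullClusters 𝒯 S₀,
      ℙ {ω | padj C ω ≤ t} ≤ ∫⁻ ω, f C ω ∂ℙ := by
    intro C hC
    set B : ℕ × ℕ → Set Ω := fun q =>
      Shat ⁻¹' {S | effSize 𝒯 S C = q.1 ∧ S.card = q.2 ∧ (C ∩ S).Nonempty} with hBdef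
    have hB𝒢 : ∀ q, MeasurableSet[𝒢] (B q) := fun q => hpre _
    have hBm : ∀ q, MeasurableSet[mΩ] (B q) := fun q => h𝒢 _ (hB𝒢 q)
    set s : ℕ × ℕ → ℝ := fun q => min 1 (t * (q.1 : ℝ) / (q.2 : ℝ)) with hsdef
    have hs0 : ∀ q, 0 ≤ s q := fun q => le_min zero_le_one (by positivity)
    have hs1 : ∀ q, s q ≤ 1 := fun q => min_le_left _ _
    have hsle : ∀ q, s q ≤ t * (q.1 : ℝ) / (q.2 : ℝ) := fun q => min_le_right _ _
    have hsubset : {ω | padj C ω ≤ t} ⊆ ⋃ q : ℕ × ℕ, B q ∩ {ω | p C ω ≤ s q} := by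
      intro ω hω
      simp only [Set.mem_setOf_eq, hpadj] at hω
      by_cases hne : (C ∩ Shat ω).Nonempty
      · rw [if_pos hne] at hω
        have hn : 0 < effSize 𝒯 (Shat ω) C := effSize_pos hne
        have hm : 0 < (Shat ω).card := by
          obtain ⟨x, hx⟩ := hne
          exact Finset.card_pos.mpr ⟨x, (Finset.mem_inter.mp hx).2⟩
        have hnR : (0:ℝ) < (effSize 𝒯 (Shat ω) C : ℝ) := by exact_mod_cast hn
        have hmR : (0:ℝ) < ((Shat ω).card : ℝ) := by exact_mod_cast hm
        have hlt : p C ω * ((Shat ω).card : ℝ) / (effSize 𝒯 (Shat ω) C : ℝ) ≤ t := by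
          rcases min_le_iff.mp hω with h | h
          · linarith
          · exact h
        rw [div_le_iff₀ hnR] at hlt
        have hple : p C ω ≤ t * (effSize 𝒯 (Shat ω) C : ℝ) / ((Shat ω).card : ℝ) := by
          rw [le_div_iff₀ hmR]
          linarith
        refine Set.mem_iUnion.mpr ⟨(effSize 𝒯 (Shat ω) C, (Shat ω).card), ?_, ?_⟩
        · exact ⟨rfl, rfl, hne⟩
        · exact le_min (hp01 C hC ω).2 hple
      · rw [if_neg hne] at hω; linarith
    have hA3 : ∀ q : ℕ × ℕ, ℙ (B q ∩ {ω | p C ω ≤ s q}) ≤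
        ENNReal.ofReal (t * (q.1 : ℝ) / (q.2 : ℝ)) * ℙ (B q) := by
      intro q
      have hps : MeasurableSet[mΩ] {ω | p C ω ≤ s q} :=
        measurableSet_le (hmeas C hC) measurable_const
      have hpsm : MeasurableSet[mΩ] {ω | p C ω ≤ s q} := hps
      set g : Ω → ℝ := Set.indicator {ω' | p C ω' ≤ s q} (fun _ => (1:ℝ)) with hgdef
      have hgint : Integrable g ℙ := (integrable_const (μ := ℙ) (1:ℝ)).indicator hpsm
      have h1 : ∫ ω in B q, g ω ∂ℙ = (ℙ (B q ∩ {ω | p C ω ≤ s q})).toReal := by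
        rw [hgdef, setIntegral_indicator (μ := ℙ) hpsm]
        simp [setIntegral_const]
        rfl
      have h2 : ∫ ω in B q, (ℙ[g|𝒢]) ω ∂ℙ = ∫ ω in B q, g ω ∂ℙ :=
        setIntegral_condExp h𝒢 hgint (hB𝒢 q)
      have hae := hcond C hC (s q) ⟨hs0 q, hs1 q⟩
      have h3 : ∫ ω in B q, (ℙ[g|𝒢]) ω ∂ℙ ≤ ∫ ω in B q, s q ∂ℙ := by
        apply setIntegral_mono_ae_restrict integrable_condExp.integrableOn
          (integrableOn_const (measure_ne_top _ _))
        filter_upwards [ae_restrict_of_ae hae, ae_restrict_mem (hBm q)] with ω h hmem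
        exact h hmem.2.2
      have h4 : ∫ ω in B q, s q ∂ℙ = s q * (ℙ (B q)).toReal := by
        rw [setIntegral_const, smul_eq_mul, mul_comm]
        rfl
      have hchain : (ℙ (B q ∩ {ω | p C ω ≤ s q})).toReal ≤ s q * (ℙ (B q)).toReal := by
        rw [← h1, ← h2]
        exact h3.trans_eq h4
      calc ℙ (B q ∩ {ω | p C ω ≤ s q})
          = ENNReal.ofReal ((ℙ (B q ∩ {ω | p C ω ≤ s q})).toReal) :=
            (ENNReal.ofReal_toReal (measure_ne_top _ _)).symm
        _ ≤ ENNReal.ofReal (s q * (ℙ (B q)).toReal) := ENNReal.ofReal_le_ofReal hchain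
        _ = ENNReal.ofReal (s q) * ℙ (B q) := by
            rw [ENNReal.ofReal_mul (hs0 q), ENNReal.ofReal_toReal (measure_ne_top _ _)]
        _ ≤ ENNReal.ofReal (t * (q.1 : ℝ) / (q.2 : ℝ)) * ℙ (B q) :=
            mul_le_mul_left (ENNReal.ofReal_le_ofReal (hsle q)) _
    have hA4 : ∑' q : ℕ × ℕ, ENNReal.ofReal (t * (q.1 : ℝ) / (q.2 : ℝ)) * ℙ (B q)
        = ∫⁻ ω, f C ω ∂ℙ := by
      have hrw : ∀ q : ℕ × ℕ, ENNReal.ofReal (t * (q.1 : ℝ) / (q.2 : ℝ)) * ℙ (B q)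
          = ∫⁻ ω, (B q).indicator
              (fun _ => ENNReal.ofReal (t * (q.1 : ℝ) / (q.2 : ℝ))) ω ∂ℙ :=
        fun q => (lintegral_indicator_const (hBm q) _).symm
      calc ∑' q : ℕ × ℕ, ENNReal.ofReal (t * (q.1 : ℝ) / (q.2 : ℝ)) * ℙ (B q)
          = ∑' q : ℕ × ℕ, ∫⁻ ω, (B q).indicator
              (fun _ => ENNReal.ofReal (t * (q.1 : ℝ) / (q.2 : ℝ))) ω ∂ℙ := tsum_congr hrw
        _ = ∫⁻ ω, ∑' q : ℕ × ℕ, (B q).indicator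
              (fun _ => ENNReal.ofReal (t * (q.1 : ℝ) / (q.2 : ℝ))) ω ∂ℙ :=
            (lintegral_tsum (fun q => (measurable_const.indicator (hBm q)).aemeasurable)).symm
        _ = ∫⁻ ω, f C ω ∂ℙ := by
            apply lintegral_congr
            intro ω
            by_cases hne : (C ∩ Shat ω).Nonempty
            · have hq0 : ω ∈ B (effSize 𝒯 (Shat ω) C, (Shat ω).card) := ⟨rfl, rfl, hne⟩
              rw [tsum_eq_single (effSize 𝒯 (Shat ω) C, (Shat ω).card) ?_]
              · rw [Set.indicator_of_mem hq0]
                simp only [hfdef, if_pos hne]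
              · intro q hq
                apply Set.indicator_of_notMem
                intro hmem
                obtain ⟨h1', h2', -⟩ := hmem
                exact hq (Prod.ext_iff.mpr ⟨h1'.symm, h2'.symm⟩)
            · have hz : ∀ q : ℕ × ℕ, (B q).indicator
                  (fun _ => ENNReal.ofReal (t * (q.1 : ℝ) / (q.2 : ℝ))) ω = 0 :=
                fun q => Set.indicator_of_notMem (fun hmem => hne hmem.2.2) _
              rw [tsum_congr hz, tsum_zero]
              simp only [hfdef, if_neg hne]
    calc ℙ {ω | padj C ω ≤ t} ≤ ℙ (⋃ q : ℕ × ℕ, B q ∩ {ω | p C ω ≤ s q}) :=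
          measure_mono hsubset
      _ ≤ ∑' q : ℕ × ℕ, ℙ (B q ∩ {ω | p C ω ≤ s q}) := measure_iUnion_le _
      _ ≤ ∑' q : ℕ × ℕ, ENNReal.ofReal (t * (q.1 : ℝ) / (q.2 : ℝ)) * ℙ (B q) :=
          ENNReal.tsum_le_tsum hA3
      _ = ∫⁻ ω, f C ω ∂ℙ := hA4
  -- Step B: sum of the integrals is at most t
  have stepB : ∑ C ∈ maxNullClusters 𝒯 S₀, ∫⁻ ω, f C ω ∂ℙ ≤ ENNReal.ofReal t := by
    rw [← lintegral_finset_sum _ (fun C _ => hfC_meas C)]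
    have hbound : ∀ᵐ ω ∂ℙ, ∑ C ∈ maxNullClusters 𝒯 S₀, f C ω ≤ ENNReal.ofReal t := by
      filter_upwards [hShatNe] with ω hω
      have hm : (0:ℝ) < ((Shat ω).card : ℝ) := by
        exact_mod_cast Finset.card_pos.mpr hω
      calc ∑ C ∈ maxNullClusters 𝒯 S₀, f C ω
          = ∑ C ∈ (maxNullClusters 𝒯 S₀).filter (fun C => (C ∩ Shat ω).Nonempty),
              ENNReal.ofReal (t * (effSize 𝒯 (Shat ω) C : ℝ) / ((Shat ω).card : ℝ)) :=
            (Finset.sum_filter _ _).symm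
        _ = ENNReal.ofReal (∑ C ∈ (maxNullClusters 𝒯 S₀).filter
              (fun C => (C ∩ Shat ω).Nonempty),
              t * (effSize 𝒯 (Shat ω) C : ℝ) / ((Shat ω).card : ℝ)) :=
            (ENNReal.ofReal_sum_of_nonneg (fun C _ => by positivity)).symm
        _ ≤ ENNReal.ofReal t := by
            apply ENNReal.ofReal_le_ofReal
            have hsum : (∑ C ∈ (maxNullClusters 𝒯 S₀).filter
                (fun C => (C ∩ Shat ω).Nonempty), (effSize 𝒯 (Shat ω) C : ℝ))
                ≤ ((Shat ω).card : ℝ) := by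
              rw [← Nat.cast_sum]
              exact_mod_cast sum_eff_le h𝒯 hbin (Shat ω)
            calc ∑ C ∈ (maxNullClusters 𝒯 S₀).filter (fun C => (C ∩ Shat ω).Nonempty),
                  t * (effSize 𝒯 (Shat ω) C : ℝ) / ((Shat ω).card : ℝ)
                = t * (∑ C ∈ (maxNullClusters 𝒯 S₀).filter
                    (fun C => (C ∩ Shat ω).Nonempty),
                    (effSize 𝒯 (Shat ω) C : ℝ)) / ((Shat ω).card : ℝ) := by
                  rw [Finset.mul_sum, Finset.sum_div]
              _ ≤ t * ((Shat ω).card : ℝ) / ((Shat ω).card : ℝ) := by gcongr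
              _ = t := by field_simp
    calc ∫⁻ ω, ∑ C ∈ maxNullClusters 𝒯 S₀, f C ω ∂ℙ
        ≤ ∫⁻ _, ENNReal.ofReal t ∂ℙ := lintegral_mono_ae hbound
      _ = ENNReal.ofReal t := by simp
  exact (Finset.sum_le_sum stepA).trans stepB
end
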